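/- arXiv:1502.01524 — 3 statements merged into one kernel-verified Lean document; each statement's English description precedes it below -/
import Mathlib

section
/- The occupancy distribution of the multi-rate Erlang loss system satisfies the Kaufman-Roberts recursion: for 1 ≤ c ≤ C, c · g(c) = ∑_{j=1}^J b_j q_j g(c - b_j), where g(c) = ∑_{Q ∈ ℕ^J : ∑_j b_j Q_j = c} ∏_j q_j^{Q_j}/Q_j! and g(c) = 0 for c < 0, g(0) = 1. -/
/-!
Every state `Q` at occupancy level `c` satisfies `c = ∑ⱼ bⱼ Qⱼ`, so
`c · g(c) = ∑ⱼ bⱼ ∑_Q Qⱼ w(Q)` with `w(Q) = ∏ⱼ qⱼ^Qⱼ / Qⱼ!`. Since `Qⱼ w(Q) = qⱼ w(Q - eⱼ)`,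
and `Q ↦ Q - eⱼ` maps the states at level `c` with `Qⱼ ≥ 1` bijectively onto the states at
level `c - bⱼ`, the inner sum equals `qⱼ g(c - bⱼ)`.
-/

/-- Unnormalized occupancy weight `g(c) = ∑_{Q ∈ ℕ^J : ∑_j b_j Q_j = c} ∏_j q_j^{Q_j}/Q_j!`
of the multi-rate Erlang loss system, extended to integer arguments (so `g(c) = 0` for
`c < 0`). Since each `b_j ≥ 1`, states contributing to level `c` satisfy `Q_j ≤ c`. -/
noncomputable def occWeight (J : ℕ) (b : Fin J → ℕ) (q : Fin J → ℝ) (c : ℤ) : ℝ :=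
  ∑ Q : Fin J → Fin (c.toNat + 1),
    if (∑ j, (b j : ℤ) * ((Q j : ℕ) : ℤ)) = c then
      ∏ j, q j ^ ((Q j : ℕ)) / (Nat.factorial (Q j) : ℝ)
    else 0

open Finset

namespace KaufmanRoberts

lemma sub_single_add_single {ι : Type*} [DecidableEq ι] {Q : ι → ℕ} {j : ι} (hQ : Q j ≠ 0) :
    Q - Pi.single j 1 + Pi.single j 1 = Q := by
  refine tsub_add_cancel_of_le fun k => ?_
  rcases eq_or_ne k j with rfl | hk
  · simpa [Nat.one_le_iff_ne_zero] using hQ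
  · simp [hk]

lemma mul_le_dotProduct {ι : Type*} [Fintype ι] (b Q : ι → ℕ) (j : ι) :
    b j * Q j ≤ b ⬝ᵥ Q :=
  single_le_sum (f := fun k => b k * Q k) (fun _ _ => Nat.zero_le _) (mem_univ j)

variable {ι K : Type*} [Fintype ι] [DecidableEq ι] [Field K]

lemma succ_mul_pow_div_factorial [CharZero K] (x : K) (m : ℕ) :
    ((m + 1 : ℕ) : K) * (x ^ (m + 1) / (m + 1).factorial) = x * (x ^ m / m.factorial) := by
  have : (m.factorial : K) ≠ 0 := Nat.cast_ne_zero.2 m.factorial_ne_zero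
  rw [Nat.factorial_succ, Nat.cast_mul]
  field_simp
  ring

noncomputable def weight (q : ι → K) (Q : ι → ℕ) : K :=
  ∏ j, q j ^ Q j / (Q j).factorial

lemma coord_mul_weight_add_single [CharZero K] (q : ι → K) (P : ι → ℕ) (j : ι) :
    ((P j + 1 : ℕ) : K) * weight q (P + Pi.single j 1) = q j * weight q P := by
  have hrest : ∀ k ∈ ({j}ᶜ : Finset ι), (Pi.single j 1 : ι → ℕ) k = 0 := fun k hk =>
    Pi.single_eq_of_ne (by simpa using hk) _
  simp only [weight, Fintype.prod_eq_mul_prod_compl j, Pi.add_apply, Pi.single_eq_same]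
  rw [prod_congr rfl fun k hk => by rw [hrest k hk, add_zero], ← mul_assoc,
    succ_mul_pow_div_factorial, mul_assoc]

def states (b : ι → ℕ) (n : ℕ) : Finset (ι → ℕ) :=
  (Fintype.piFinset fun _ => range (n + 1)).filter fun Q => b ⬝ᵥ Q = n

lemma mem_states {b : ι → ℕ} (hb : ∀ j, 1 ≤ b j) {n : ℕ} {Q : ι → ℕ} :
    Q ∈ states b n ↔ b ⬝ᵥ Q = n := by
  refine ⟨fun h => (mem_filter.1 h).2, fun h => mem_filter.2 ⟨?_, h⟩⟩
  refine Fintype.mem_piFinset.2 fun j => mem_range_succ_iff.2 ?_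
  calc Q j ≤ b j * Q j := Nat.le_mul_of_pos_left _ (hb j)
    _ ≤ b ⬝ᵥ Q := mul_le_dotProduct b Q j
    _ = n := h

lemma natCast_mul_sum_states (b : ι → ℕ) (q : ι → K) (n : ℕ) :
    (n : K) * ∑ Q ∈ states b n, weight q Q
      = ∑ j, (b j : K) * ∑ Q ∈ states b n, (Q j : K) * weight q Q := by
  simp_rw [mul_sum, ← mul_assoc]
  rw [sum_comm]
  refine sum_congr rfl fun Q hQ => ?_
  rw [← sum_mul, ← (mem_filter.1 hQ).2]
  push_cast [dotProduct]
  rfl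

lemma dotProduct_add_single (b P : ι → ℕ) (j : ι) :
    b ⬝ᵥ (P + Pi.single j 1) = b ⬝ᵥ P + b j := by
  rw [dotProduct_add, dotProduct_single, mul_one]

lemma sum_states_coord_mul_weight [CharZero K] {b : ι → ℕ} (hb : ∀ j, 1 ≤ b j) (q : ι → K)
    (j : ι) (n : ℕ) :
    ∑ Q ∈ states b (n + b j), (Q j : K) * weight q Q = q j * ∑ P ∈ states b n, weight q P := by
  rw [mul_sum, ← sum_filter_of_ne (p := fun Q => Q j ≠ 0) fun Q _ h hQ => by simp [hQ] at h]
  symm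
  refine sum_nbij' (· + Pi.single j 1) (· - Pi.single j 1) (fun P hP => ?_) (fun Q hQ => ?_)
    (fun P _ => add_tsub_cancel_right P _) (fun Q hQ => sub_single_add_single (mem_filter.1 hQ).2)
    (fun P _ => ?_)
  · rw [mem_states hb] at hP
    simp [mem_filter, mem_states hb, hP]
  · obtain ⟨hQ, hQj⟩ := mem_filter.1 hQ
    rw [mem_states hb] at hQ ⊢
    rw [← sub_single_add_single hQj, dotProduct_add_single] at hQ
    omega
  · simpa using (coord_mul_weight_add_single q P j).symm

lemma sum_states_coord_mul_weight_of_lt {b : ι → ℕ} (q : ι → K) {j : ι} {n : ℕ}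
    (hn : n < b j) : ∑ Q ∈ states b n, (Q j : K) * weight q Q = 0 := by
  refine sum_eq_zero fun Q hQ => ?_
  have hQj : Q j = 0 := by
    by_contra hQj
    have hle : b j * Q j ≤ n := (mem_filter.1 hQ).2 ▸ mul_le_dotProduct b Q j
    have hge : b j ≤ b j * Q j := Nat.le_mul_of_pos_right _ (Nat.pos_of_ne_zero hQj)
    omega
  simp [hQj]

end KaufmanRoberts

open KaufmanRoberts

lemma occWeight_eq_sum_filter (J : ℕ) (b : Fin J → ℕ) (q : Fin J → ℝ) (c : ℤ) :
    occWeight J b q c = ∑ Q ∈ (Fintype.piFinset fun _ => range (c.toNat + 1)) with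
      ((b ⬝ᵥ Q : ℕ) : ℤ) = c, weight q Q := by
  rw [sum_filter, ← image_fin_univ, Fintype.piFinset_image, Fintype.piFinset_univ,
    sum_image fun Q _ R _ h => funext fun j => Fin.ext (congrFun h j)]
  simp [occWeight, weight, dotProduct]

lemma occWeight_of_neg (J : ℕ) (b : Fin J → ℕ) (q : Fin J → ℝ) {c : ℤ} (hc : c < 0) :
    occWeight J b q c = 0 := by
  rw [occWeight_eq_sum_filter, filter_false_of_mem fun Q _ => by omega, sum_empty]

lemma occWeight_natCast (J : ℕ) (b : Fin J → ℕ) (q : Fin J → ℝ) (n : ℕ) :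
    occWeight J b q n = ∑ Q ∈ states b n, weight q Q := by
  simp [occWeight_eq_sum_filter, states]

lemma occWeight_zero (J : ℕ) (b : Fin J → ℕ) (q : Fin J → ℝ) : occWeight J b q 0 = 1 := by
  have hstates : states b 0 = {0} := by
    ext Q
    simp +contextual [states, funext_iff, dotProduct]
  simpa [hstates, weight] using occWeight_natCast J b q 0

theorem kaufman_roberts_recursion_general (J : ℕ) (b : Fin J → ℕ) (q : Fin J → ℝ) (C : ℤ)
    (hb : ∀ j, 1 ≤ b j) :
    (∀ c : ℤ, c < 0 → occWeight J b q c = 0) ∧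
    occWeight J b q 0 = 1 ∧
    (∀ c : ℤ, 1 ≤ c → c ≤ C →
      (c : ℝ) * occWeight J b q c
        = ∑ j, (b j : ℝ) * q j * occWeight J b q (c - b j)) := by
  refine ⟨fun c hc => occWeight_of_neg J b q hc, occWeight_zero J b q, fun c hc _ => ?_⟩
  lift c to ℕ using by omega
  rw [Int.cast_natCast, occWeight_natCast, natCast_mul_sum_states]
  refine sum_congr rfl fun j _ => ?_
  rw [mul_assoc]
  congr 1
  rcases le_or_gt (b j) c with hle | hlt
  · obtain ⟨n, rfl⟩ := Nat.exists_eq_add_of_le' hle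
    rw [sum_states_coord_mul_weight hb, ← occWeight_natCast, Nat.cast_add, add_sub_cancel_right]
  · rw [sum_states_coord_mul_weight_of_lt q hlt, occWeight_of_neg J b q (by omega), mul_zero]

/-- Kaufman–Roberts recursion: `g(c) = 0` for `c < 0`, `g(0) = 1`, and for
`1 ≤ c ≤ C`, `c · g(c) = ∑_{j=1}^J b_j q_j g(c - b_j)`. -/
theorem kaufman_roberts_recursion (J : ℕ) (b : Fin J → ℕ) (q : Fin J → ℝ) (C : ℤ)
    (hb : ∀ j, 1 ≤ b j) (hq : ∀ j, 0 < q j) :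
    (∀ c : ℤ, c < 0 → occWeight J b q c = 0) ∧
    occWeight J b q 0 = 1 ∧
    (∀ c : ℤ, 1 ≤ c → c ≤ C →
      (c : ℝ) * occWeight J b q c
        = ∑ j, (b j : ℝ) * q j * occWeight J b q (c - b j)) :=
  kaufman_roberts_recursion_general J b q C hb
end

section
/- Elasticity/symmetry property of blocking probabilities: in the multi-rate Erlang loss system, the partial derivative of the blocking probability of class j_1 with respect to the offered load of class j_2 equals the partial derivative of the blocking probability of class j_2 with respect to the offered load of class j_1: ∂β_{j_1}/∂q_{j_2} = ∂β_{j_2}/∂q_{j_1}. -/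
/-- Normalizing function `H(c, J) = ∑_{Q : ∑_k b_k Q_k ≤ c} ∏_k q_k^{Q_k}/Q_k!`,
as a function of the vector of offered loads `q`. -/
noncomputable def Hfun (J : ℕ) (b : Fin J → ℕ) (c : ℕ) (q : Fin J → ℝ) : ℝ :=
  ∑ Q : Fin J → Fin (c + 1),
    if ∑ k, b k * (Q k : ℕ) ≤ c then ∏ k, q k ^ ((Q k : ℕ)) / (Nat.factorial (Q k) : ℝ)
    else 0

/-- Blocking probability of class `j` as a function of the offered loads. -/
noncomputable def lolp (J : ℕ) (b : Fin J → ℕ) (C : ℕ) (j : Fin J) (q : Fin J → ℝ) : ℝ :=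
  1 - Hfun J b (C - b j) q / Hfun J b C q

/-! Differentiating `q_j ^ n / n!` gives `q_j ^ (n - 1) / (n - 1)!`, so shifting the occupancy
vector by one class-`j` call shows `∂H(c)/∂q_j = H(c - b_j)`, with `H(c) = 0` for `c < 0`. The
quotient rule then gives
`∂β_i/∂q_j = (H(C - b_i) H(C - b_j) - H(C) H(C - b_i - b_j)) / H(C)²`,
which is symmetric in `i` and `j`. -/

open Finset Function Nat

namespace ErlangLoss

variable {ι : Type*} [Fintype ι]

noncomputable def weight (q : ι → ℝ) (Q : ι → ℕ) : ℝ :=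
  ∏ k, q k ^ Q k / (Q k)!

lemma weight_nonneg {q : ι → ℝ} (hq : ∀ k, 0 ≤ q k) (Q : ι → ℕ) : 0 ≤ weight q Q :=
  prod_nonneg fun k _ => div_nonneg (pow_nonneg (hq k) _) (by positivity)

variable [DecidableEq ι]

def box (N : ℕ) : Finset (ι → ℕ) :=
  Fintype.piFinset fun _ => range (N + 1)

lemma mem_box {N : ℕ} {Q : ι → ℕ} : Q ∈ box N ↔ ∀ k, Q k ≤ N := by
  simp [box]

lemma mem_box_of_dotProduct_le {b : ι → ℕ} (hb : ∀ k, 0 < b k) {N : ℕ} {Q : ι → ℕ}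
    (h : b ⬝ᵥ Q ≤ N) : Q ∈ box N := by
  refine mem_box.2 fun k => ?_
  calc Q k ≤ b k * Q k := Nat.le_mul_of_pos_left _ (hb k)
    _ ≤ b ⬝ᵥ Q := single_le_sum (f := fun i => b i * Q i) (fun _ _ => Nat.zero_le _) (mem_univ k)
    _ ≤ N := h

/-- `H(c)` with an integer capacity, so that `H(c) = 0` for `c < 0`; the box only makes the sum
finite. -/
noncomputable def normalizingSum (b : ι → ℕ) (N : ℕ) (c : ℤ) (q : ι → ℝ) : ℝ :=
  ∑ Q ∈ box N, if ((b ⬝ᵥ Q : ℕ) : ℤ) ≤ c then weight q Q else 0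

lemma weight_add_single_update (q : ι → ℝ) (Q : ι → ℕ) (j : ι) (t : ℝ) :
    weight (update q j t) (Q + Pi.single j 1)
      = t ^ (Q j + 1) / (Q j + 1)! * ∏ k ∈ univ.erase j, q k ^ Q k / (Q k)! := by
  rw [weight, ← mul_prod_erase univ _ (mem_univ j)]
  simp only [update_self, Pi.add_apply, Pi.single_eq_same]
  congr 1
  refine prod_congr rfl fun k hk => ?_
  have hkj := ne_of_mem_erase hk
  simp [update_of_ne hkj, Pi.single_eq_of_ne hkj]

lemma hasDerivAt_pow_succ_div_factorial (n : ℕ) (x : ℝ) :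
    HasDerivAt (fun t : ℝ => t ^ (n + 1) / (n + 1)!) (x ^ n / n !) x := by
  refine ((hasDerivAt_pow (n + 1) x).div_const ((n + 1)! : ℝ)).congr_deriv ?_
  rw [Nat.factorial_succ]
  push_cast
  field_simp

lemma hasDerivAt_weight_add_single (q : ι → ℝ) (Q : ι → ℕ) (j : ι) :
    HasDerivAt (fun t => weight (update q j t) (Q + Pi.single j 1)) (weight q Q) (q j) := by
  simp only [weight_add_single_update]
  rw [weight, ← mul_prod_erase univ _ (mem_univ j)]
  exact (hasDerivAt_pow_succ_div_factorial (Q j) (q j)).mul_const _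

lemma sub_single_add_single_of_ne_zero {κ : Type*} [DecidableEq κ] {Q : κ → ℕ} {j : κ}
    (hQ : Q j ≠ 0) :
    Q - Pi.single j 1 + Pi.single j 1 = Q := by
  funext k
  rcases eq_or_ne k j with rfl | hkj
  · simp only [Pi.add_apply, Pi.sub_apply, Pi.single_eq_same]
    omega
  · simp [Pi.single_eq_of_ne hkj]

lemma hasDerivAt_weight (q : ι → ℝ) (Q : ι → ℕ) (j : ι) :
    HasDerivAt (fun t => weight (update q j t) Q)
      (if Q j = 0 then 0 else weight q (Q - Pi.single j 1)) (q j) := by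
  split_ifs with hQ
  · have hconst : (fun t => weight (update q j t) Q) = fun _ => weight q Q := by
      funext t
      refine prod_congr rfl fun k _ => ?_
      rcases eq_or_ne k j with rfl | hkj
      · simp [hQ]
      · rw [update_of_ne hkj]
    rw [hconst]
    exact hasDerivAt_const _ _
  · have h := hasDerivAt_weight_add_single q (Q - Pi.single j 1) j
    rwa [sub_single_add_single_of_ne_zero hQ] at h

lemma normalizingSum_pos (b : ι → ℕ) (N : ℕ) {c : ℤ} (hc : 0 ≤ c) {q : ι → ℝ}
    (hq : ∀ k, 0 ≤ q k) : 0 < normalizingSum b N c q := by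
  have h0 : (0 : ι → ℕ) ∈ box N := mem_box.2 fun _ => Nat.zero_le _
  calc (0 : ℝ) < 1 := one_pos
    _ = if ((b ⬝ᵥ 0 : ℕ) : ℤ) ≤ c then weight q 0 else 0 := by simp [hc, weight]
    _ ≤ normalizingSum b N c q :=
      single_le_sum (f := fun Q => if ((b ⬝ᵥ Q : ℕ) : ℤ) ≤ c then weight q Q else 0)
        (fun Q _ => by split_ifs; exacts [weight_nonneg hq Q, le_rfl]) h0

lemma normalizingSum_eq_of_le {b : ι → ℕ} (hb : ∀ k, 0 < b k) {N M : ℕ} {c : ℤ}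
    (hcN : c ≤ N) (hNM : N ≤ M) (q : ι → ℝ) :
    normalizingSum b N c q = normalizingSum b M c q := by
  refine sum_subset (fun Q hQ => mem_box.2 fun k => (mem_box.1 hQ k).trans hNM) fun Q _ hQN => ?_
  rw [if_neg]
  exact fun h => hQN (mem_box_of_dotProduct_le hb (by omega))

lemma normalizingSum_sub_eq_sum {b : ι → ℕ} (hb : ∀ k, 0 < b k) {N : ℕ} {c : ℤ} (hc : c ≤ N)
    (q : ι → ℝ) (j : ι) :
    normalizingSum b N (c - b j) q
      = ∑ Q ∈ box N, if ((b ⬝ᵥ Q : ℕ) : ℤ) ≤ c then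
          (if Q j = 0 then 0 else weight q (Q - Pi.single j 1)) else 0 := by
  have hdot : ∀ Q : ι → ℕ, b ⬝ᵥ (Q + Pi.single j 1) = b ⬝ᵥ Q + b j := fun Q => by
    rw [dotProduct_add, dotProduct_single, mul_one]
  refine sum_bij_ne_zero (fun Q _ _ => Q + Pi.single j 1) ?_ ?_ ?_ ?_
  · intro Q _ hQ
    have hcond := (ite_ne_right_iff.1 hQ).1
    refine mem_box_of_dotProduct_le hb ?_
    rw [hdot]
    omega
  · intro _ _ _ _ _ _ h
    exact add_right_cancel h
  · intro Q hQbox hQ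
    obtain ⟨hcond, hQ⟩ := ite_ne_right_iff.1 hQ
    obtain ⟨hj, hw⟩ := ite_ne_left_iff.1 hQ
    have hsplit := sub_single_add_single_of_ne_zero hj
    refine ⟨Q - Pi.single j 1, mem_box.2 fun k => (Nat.sub_le _ _).trans (mem_box.1 hQbox k), ?_,
      hsplit⟩
    rw [← hsplit, hdot] at hcond
    rw [if_pos (by omega)]
    exact hw.symm
  · intro Q _ _
    simp only [hdot, Pi.add_apply, Pi.single_eq_same, add_tsub_cancel_right, Nat.add_one_ne_zero,
      if_false]
    exact if_congr (by omega) rfl rfl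

lemma hasDerivAt_normalizingSum {b : ι → ℕ} (hb : ∀ k, 0 < b k) {N : ℕ} {c : ℤ} (hc : c ≤ N)
    (q : ι → ℝ) (j : ι) :
    HasDerivAt (fun t => normalizingSum b N c (update q j t)) (normalizingSum b N (c - b j) q)
      (q j) := by
  rw [normalizingSum_sub_eq_sum hb hc]
  refine HasDerivAt.fun_sum fun Q _ => ?_
  by_cases h : ((b ⬝ᵥ Q : ℕ) : ℤ) ≤ c
  · simpa only [h, if_true] using hasDerivAt_weight q Q j
  · simpa only [h, if_false] using hasDerivAt_const (q j) (0 : ℝ)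

end ErlangLoss

open ErlangLoss

lemma Hfun_eq_normalizingSum (J : ℕ) (b : Fin J → ℕ) (c : ℕ) (q : Fin J → ℝ) :
    Hfun J b c q = normalizingSum b c c q := by
  refine sum_nbij (fun Q k => (Q k : ℕ)) (fun Q _ => mem_box.2 fun k => Fin.is_le (Q k))
    (fun Q₁ _ Q₂ _ h => funext fun k => Fin.ext (congr_fun h k))
    (fun Q hQ => ⟨fun k => ⟨Q k, Nat.lt_succ_of_le (mem_box.1 hQ k)⟩, mem_univ _, rfl⟩)
    fun Q _ => ?_
  simp only [dotProduct, weight, Nat.cast_le]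

lemma lolp_eq_normalizingSum {J : ℕ} {b : Fin J → ℕ} (hb : ∀ k, 0 < b k) {C : ℕ} {j : Fin J}
    (hj : b j ≤ C) :
    lolp J b C j = fun q => 1 - normalizingSum b C (C - b j) q / normalizingSum b C C q := by
  funext q
  rw [lolp, Hfun_eq_normalizingSum, Hfun_eq_normalizingSum, Nat.cast_sub hj,
    normalizingSum_eq_of_le hb (by omega) (Nat.sub_le C (b j))]

lemma hasDerivAt_lolp_update {J : ℕ} {b : Fin J → ℕ} (hb : ∀ k, 0 < b k) {C : ℕ}
    (hbC : ∀ k, b k ≤ C) {q : Fin J → ℝ} (hq : ∀ k, 0 ≤ q k) (i j : Fin J) :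
    HasDerivAt (fun t => lolp J b C i (update q j t))
      ((normalizingSum b C (C - b i) q * normalizingSum b C (C - b j) q
          - normalizingSum b C C q * normalizingSum b C (C - b i - b j) q)
        / normalizingSum b C C q ^ 2) (q j) := by
  have hpos := normalizingSum_pos b C (Nat.cast_nonneg C) hq
  have hnum := hasDerivAt_normalizingSum hb (N := C) (c := C - b i) (by omega) q j
  have hden := hasDerivAt_normalizingSum hb (c := C) le_rfl q j
  rw [lolp_eq_normalizingSum hb (hbC i)]
  refine ((hnum.div hden (by rw [update_eq_self]; exact hpos.ne')).const_sub 1).congr_deriv ?_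
  simp only [update_eq_self]
  field_simp
  ring

/-- Elasticity/symmetry property: the partial derivative of the blocking probability of
class `j₁` with respect to the offered load of class `j₂` equals the partial derivative
of the blocking probability of class `j₂` with respect to the offered load of class `j₁`. -/
theorem lolp_derivative_symmetry (J : ℕ) (b : Fin J → ℕ) (C : ℕ)
    (hb : ∀ j, 0 < b j) (hbC : ∀ j, b j ≤ C)
    (q : Fin J → ℝ) (hq : ∀ j, 0 < q j) (j₁ j₂ : Fin J) :
    deriv (fun t => lolp J b C j₁ (Function.update q j₂ t)) (q j₂)
      = deriv (fun t => lolp J b C j₂ (Function.update q j₁ t)) (q j₁) := by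
  have hq' : ∀ k, 0 ≤ q k := fun k => (hq k).le
  rw [(hasDerivAt_lolp_update hb hbC hq' j₁ j₂).deriv,
    (hasDerivAt_lolp_update hb hbC hq' j₂ j₁).deriv, sub_sub, sub_sub, add_comm (b j₁ : ℤ)]
  ring
end

section
/- The function ψ defined as the inverse of x ↦ φ(x)/Φ(x) (with φ the standard normal density and Φ the standard normal CDF) satisfies φ(ψ(y))/Φ(ψ(y)) = y for all y in the range of φ/Φ; moreover ψ is strictly decreasing and satisfies ψ(y) + y > 0 for all y > 0 in its domain. -/
open Real MeasureTheory Set Filter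

/-- Standard normal density `φ(x) = e^{-x²/2}/√(2π)`. -/
noncomputable def stdNormalPDF (x : ℝ) : ℝ := Real.exp (-x ^ 2 / 2) / Real.sqrt (2 * Real.pi)

/-- Standard normal CDF `Φ(x) = ∫_{-∞}^x φ(t) dt`. -/
noncomputable def stdNormalCDF (x : ℝ) : ℝ := ∫ t in Set.Iic x, stdNormalPDF t

lemma stdNormalPDF_pos (x : ℝ) : 0 < stdNormalPDF x :=
  div_pos (Real.exp_pos _) (Real.sqrt_pos.mpr (by positivity))

lemma stdNormalPDF_eq (x : ℝ) :
    stdNormalPDF x = (Real.sqrt (2 * Real.pi))⁻¹ * Real.exp (-(1/2) * x ^ 2) := by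
  unfold stdNormalPDF; rw [div_eq_inv_mul]; ring_nf

lemma stdNormalPDF_continuous : Continuous stdNormalPDF := by
  unfold stdNormalPDF; fun_prop

lemma stdNormalPDF_integrable : Integrable stdNormalPDF := by
  have h := (integrable_exp_neg_mul_sq (by norm_num : (0:ℝ) < 1/2)).const_mul
    (Real.sqrt (2 * Real.pi))⁻¹
  exact h.congr (Filter.Eventually.of_forall fun x => (stdNormalPDF_eq x).symm)

lemma mul_stdNormalPDF_integrable : Integrable fun t : ℝ => t * stdNormalPDF t := by
  have h := (integrable_mul_exp_neg_mul_sq (by norm_num : (0:ℝ) < 1/2)).const_mul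
    (Real.sqrt (2 * Real.pi))⁻¹
  refine h.congr (Filter.Eventually.of_forall fun x => ?_)
  simp only [stdNormalPDF_eq]; ring

lemma stdNormalPDF_hasDerivAt (x : ℝ) :
    HasDerivAt stdNormalPDF (-(x * stdNormalPDF x)) x := by
  have h1 : HasDerivAt (fun t : ℝ => -(1/2) * t ^ 2) (-(1/2) * (2 * x)) x := by
    simpa using ((hasDerivAt_pow 2 x).const_mul (-(1/2) : ℝ))
  have h2 : HasDerivAt (fun t : ℝ => (Real.sqrt (2 * Real.pi))⁻¹ *
      Real.exp (-(1/2) * t ^ 2))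
      ((Real.sqrt (2 * Real.pi))⁻¹ * (Real.exp (-(1/2) * x ^ 2) * (-(1/2) * (2 * x)))) x :=
    (h1.exp).const_mul _
  have heq : stdNormalPDF = fun t => (Real.sqrt (2 * Real.pi))⁻¹ *
      Real.exp (-(1/2) * t ^ 2) := funext stdNormalPDF_eq
  rw [heq]
  convert h2 using 1
  simp only [stdNormalPDF_eq]; ring

lemma stdNormalPDF_tendsto_atBot : Tendsto stdNormalPDF atBot (nhds 0) := by
  have hsq : Tendsto (fun t : ℝ => t ^ 2) atBot atTop := by
    have h := (tendsto_pow_atTop (by norm_num : (2:ℕ) ≠ 0) :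
      Tendsto (fun x : ℝ => x ^ 2) atTop atTop).comp tendsto_neg_atBot_atTop
    refine h.congr fun t => ?_
    simp [Function.comp]
  have harg : Tendsto (fun t : ℝ => -t ^ 2 / 2) atBot atBot := by
    apply Tendsto.atBot_div_const (by norm_num)
    exact tendsto_neg_atTop_atBot.comp hsq
  have hexp : Tendsto (fun t : ℝ => Real.exp (-t ^ 2 / 2)) atBot (nhds 0) :=
    Real.tendsto_exp_atBot.comp harg
  have h0 := hexp.div_const (Real.sqrt (2 * Real.pi))
  unfold stdNormalPDF
  simpa using h0

lemma integral_mul_pdf_Iic (x : ℝ) :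
    ∫ t in Iic x, t * stdNormalPDF t = -stdNormalPDF x := by
  have h := integral_Iic_of_hasDerivAt_of_tendsto
    (f := fun t => -stdNormalPDF t) (f' := fun t => t * stdNormalPDF t) (a := x) (m := 0)
    ((stdNormalPDF_continuous.neg).continuousWithinAt)
    (fun t _ => by have h := (stdNormalPDF_hasDerivAt t).neg; rwa [neg_neg] at h)
    (mul_stdNormalPDF_integrable.integrableOn)
    (by simpa using stdNormalPDF_tendsto_atBot.neg)
  simpa using h

lemma stdNormalCDF_pos (x : ℝ) : 0 < stdNormalCDF x := by
  rw [stdNormalCDF]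
  rw [setIntegral_pos_iff_support_of_nonneg_ae
    (Filter.Eventually.of_forall fun t => (stdNormalPDF_pos t).le)
    stdNormalPDF_integrable.integrableOn]
  have : Function.support stdNormalPDF = Set.univ := by
    ext t; simp [(stdNormalPDF_pos t).ne']
  rw [this, Set.univ_inter]
  simp [Real.volume_Iic]

lemma stdNormalCDF_hasDerivAt (x : ℝ) :
    HasDerivAt stdNormalCDF (stdNormalPDF x) x := by
  have heq : stdNormalCDF = fun y => stdNormalCDF 0 + ∫ t in (0:ℝ)..y, stdNormalPDF t := by
    funext y
    have := intervalIntegral.integral_Iic_sub_Iic (μ := volume) (f := stdNormalPDF)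
      (stdNormalPDF_integrable.integrableOn) (stdNormalPDF_integrable.integrableOn)
      (a := (0:ℝ)) (b := y)
    unfold stdNormalCDF
    linarith [this]
  rw [heq]
  have h := intervalIntegral.integral_hasDerivAt_right
    (stdNormalPDF_integrable.intervalIntegrable (a := (0:ℝ)) (b := x))
    (stdNormalPDF_continuous.stronglyMeasurableAtFilter _ _)
    (stdNormalPDF_continuous.continuousAt (x := x))
  simpa using (h.const_add (stdNormalCDF 0))

/-- `g x = φ(x) + x Φ(x)`. -/
noncomputable def millsG (x : ℝ) : ℝ := stdNormalPDF x + x * stdNormalCDF x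

lemma millsG_hasDerivAt (x : ℝ) : HasDerivAt millsG (stdNormalCDF x) x := by
  have h1 := stdNormalPDF_hasDerivAt x
  have h2 : HasDerivAt (fun t => t * stdNormalCDF t)
      (1 * stdNormalCDF x + x * stdNormalPDF x) x :=
    (hasDerivAt_id x).mul (stdNormalCDF_hasDerivAt x)
  have := h1.add h2
  have e : stdNormalCDF x = -(x * stdNormalPDF x) + (1 * stdNormalCDF x + x * stdNormalPDF x) := by ring
  rw [e]; exact this

lemma millsG_strictMono : StrictMono millsG :=
  strictMono_of_deriv_pos fun x => by
    rw [(millsG_hasDerivAt x).deriv]; exact stdNormalCDF_pos x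

lemma millsG_nonneg_of_neg {x : ℝ} (hx : x < 0) : 0 ≤ millsG x := by
  have hmono : ∀ t ∈ Iic x, stdNormalPDF t ≤ x⁻¹ * (t * stdNormalPDF t) := by
    intro t ht
    have ht' : t ≤ x := ht
    have hpos := stdNormalPDF_pos t
    have h1 : 0 ≤ (t - x) / x := by
      rw [div_nonneg_iff]; right; constructor <;> linarith
    have hx' : x ≠ 0 := hx.ne
    have : x⁻¹ * (t * stdNormalPDF t) - stdNormalPDF t = ((t - x) / x) * stdNormalPDF t := by
      field_simp
    nlinarith [mul_nonneg h1 hpos.le]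
  have hint : stdNormalCDF x ≤ ∫ t in Iic x, x⁻¹ * (t * stdNormalPDF t) := by
    refine setIntegral_mono_on stdNormalPDF_integrable.integrableOn
      ((mul_stdNormalPDF_integrable.const_mul x⁻¹).integrableOn) measurableSet_Iic hmono
  have hsm : (∫ t in Iic x, x⁻¹ * (t * stdNormalPDF t))
      = x⁻¹ * ∫ t in Iic x, t * stdNormalPDF t := by
    simp_rw [← smul_eq_mul (a := x⁻¹)]
    exact integral_smul x⁻¹ _
  rw [hsm, integral_mul_pdf_Iic] at hint
  have hx' : x ≠ 0 := hx.ne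
  unfold millsG
  have : x * stdNormalCDF x ≥ x * (x⁻¹ * -stdNormalPDF x) :=
    mul_le_mul_of_nonpos_left hint hx.le
  rw [← mul_assoc, mul_inv_cancel₀ hx', one_mul] at this
  linarith

lemma millsG_pos (x : ℝ) : 0 < millsG x := by
  rcases le_or_gt 0 x with hx | hx
  · exact add_pos_of_pos_of_nonneg (stdNormalPDF_pos x)
      (mul_nonneg hx (stdNormalCDF_pos x).le)
  · calc (0:ℝ) ≤ millsG (x - 1) := millsG_nonneg_of_neg (by linarith)
      _ < millsG x := millsG_strictMono (by linarith)

lemma mills_strictAnti : StrictAnti (fun x => stdNormalPDF x / stdNormalCDF x) := by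
  apply strictAnti_of_deriv_neg
  intro x
  have hd : HasDerivAt (fun x => stdNormalPDF x / stdNormalCDF x)
      ((-(x * stdNormalPDF x) * stdNormalCDF x - stdNormalPDF x * stdNormalPDF x) /
        (stdNormalCDF x) ^ 2) x :=
    (stdNormalPDF_hasDerivAt x).div (stdNormalCDF_hasDerivAt x) (stdNormalCDF_pos x).ne'
  rw [hd.deriv]
  apply div_neg_of_neg_of_pos
  · have : -(x * stdNormalPDF x) * stdNormalCDF x - stdNormalPDF x * stdNormalPDF x
        = -(stdNormalPDF x * millsG x) := by unfold millsG; ring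
    rw [this]
    exact neg_lt_zero.mpr (mul_pos (stdNormalPDF_pos x) (millsG_pos x))
  · exact pow_pos (stdNormalCDF_pos x) 2

/-- If `ψ : (0,∞) → ℝ` is the inverse of the map `x ↦ φ(x)/Φ(x)` (that is,
`φ(ψ(y))/Φ(ψ(y)) = y` for all `y > 0`), then `ψ` is strictly decreasing on `(0,∞)` and
satisfies `ψ(y) + y > 0` for all `y > 0`. -/
theorem inverse_mills_ratio_strictAnti_and_shift_pos (ψ : ℝ → ℝ)
    (hinv : ∀ y ∈ Set.Ioi (0 : ℝ), stdNormalPDF (ψ y) / stdNormalCDF (ψ y) = y) :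
    StrictAntiOn ψ (Set.Ioi (0 : ℝ)) ∧ ∀ y ∈ Set.Ioi (0 : ℝ), ψ y + y > 0 := by
  constructor
  · intro y₁ h₁ y₂ h₂ hlt
    have := mills_strictAnti.lt_iff_gt (a := ψ y₁) (b := ψ y₂)
    rw [hinv y₁ h₁, hinv y₂ h₂] at this
    exact this.mp hlt
  · intro y hy
    have hΦ := stdNormalCDF_pos (ψ y)
    have hg := millsG_pos (ψ y)
    have heq : ψ y + stdNormalPDF (ψ y) / stdNormalCDF (ψ y)
        = millsG (ψ y) / stdNormalCDF (ψ y) := by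
      unfold millsG; field_simp; ring
    have hpos := div_pos hg hΦ
    rw [← heq] at hpos
    rw [hinv y hy] at hpos
    exact hpos
end
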